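/- The sequence of left A-modules 0 → A → A ⊗_{A^s} A → A → 0 is exact, where the first map is η_s : a ↦ a·α_s⊗1 + a⊗α_s and the second map sends x⊗y to x·s(y). In particular η_s is injective, the map x⊗y ↦ x·s(y) is surjective, and its kernel equals the image of η_s. -/

import Mathlib

open scoped TensorProduct

set_option maxHeartbeats 1000000
set_option synthInstance.maxHeartbeats 400000

noncomputable section

/-- The embedding of linear forms on `V` into the polynomial algebra `A = k[V]`
(realized as `MvPolynomial ι k` via a basis `b` of the dual space `V*`, so that `A`
is the symmetric algebra of `V*`). -/
def dualToPoly {k V : Type*} [Field k] [AddCommGroup V] [Module k V] {ι : Type*}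
    (b : Module.Basis ι k (Module.Dual k V)) (φ : Module.Dual k V) : MvPolynomial ι k :=
  (b.repr φ).sum fun i c => MvPolynomial.C c * MvPolynomial.X i

/-- The algebra endomorphism of `A = k[V]` induced by `s : V → V`, i.e. `f ↦ f ∘ s`. -/
def polyAut {k V : Type*} [Field k] [AddCommGroup V] [Module k V] {ι : Type*}
    (b : Module.Basis ι k (Module.Dual k V)) (s : V →ₗ[k] V) :
    MvPolynomial ι k →ₐ[k] MvPolynomial ι k :=
  MvPolynomial.aeval fun i => dualToPoly b (s.dualMap (b i))

/-- The invariant subalgebra `A^s ⊆ A = k[V]`. -/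
def invariantSub {k V : Type*} [Field k] [AddCommGroup V] [Module k V] {ι : Type*}
    (b : Module.Basis ι k (Module.Dual k V)) (s : V →ₗ[k] V) : Subalgebra k (MvPolynomial ι k) :=
  AlgHom.equalizer (polyAut b s) (AlgHom.id k (MvPolynomial ι k))

section Aux

variable {k V : Type*} [Field k] [AddCommGroup V] [Module k V] {ι : Type*}
  (b : Module.Basis ι k (Module.Dual k V))

/-- `dualToPoly` as a linear map. -/
def dtp : Module.Dual k V →ₗ[k] MvPolynomial ι k :=
  (Finsupp.linearCombination k MvPolynomial.X).comp b.repr.toLinearMap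

lemma dtp_eq (φ : Module.Dual k V) : dtp b φ = dualToPoly b φ := by
  simp only [dtp, dualToPoly, LinearMap.comp_apply, LinearEquiv.coe_toLinearMap,
    Finsupp.linearCombination_apply]
  exact Finsupp.sum_congr fun i _ => (MvPolynomial.smul_eq_C_mul _ _)

lemma dtp_basis (i : ι) : dtp b (b i) = MvPolynomial.X i := by
  simp [dtp]

lemma dtp_injective : Function.Injective (dtp (k := k) (V := V) (ι := ι) b) := by
  apply Function.Injective.comp (g := ⇑(Finsupp.linearCombination k MvPolynomial.X))
  · exact MvPolynomial.linearIndependent_X ι k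
  · exact b.repr.injective

lemma polyAut_dtp (s : V →ₗ[k] V) (φ : Module.Dual k V) :
    polyAut b s (dtp b φ) = dtp b (s.dualMap φ) := by
  have : (polyAut b s).toLinearMap ∘ₗ dtp b = dtp b ∘ₗ s.dualMap := by
    apply b.ext
    intro i
    simp only [LinearMap.comp_apply, AlgHom.toLinearMap_apply, dtp_basis]
    rw [polyAut, MvPolynomial.aeval_X, dtp_eq]
  exact DFunLike.congr_fun this φ

lemma polyAut_sq {s : V →ₗ[k] V} (hs : s ∘ₗ s = LinearMap.id) (f : MvPolynomial ι k) :
    polyAut b s (polyAut b s f) = f := by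
  have : (polyAut b s).comp (polyAut b s) = AlgHom.id k (MvPolynomial ι k) := by
    apply MvPolynomial.algHom_ext
    intro i
    have h2 : s.dualMap ∘ₗ s.dualMap = LinearMap.id := by
      rw [LinearMap.dualMap_comp_dualMap, hs, LinearMap.dualMap_id]
    simp only [AlgHom.comp_apply, AlgHom.id_apply]
    rw [← dtp_basis b i, polyAut_dtp, polyAut_dtp,
      show s.dualMap (s.dualMap (b i)) = b i from DFunLike.congr_fun h2 (b i)]
  exact DFunLike.congr_fun this f


lemma exists_ne_zero_of_dual {α : Module.Dual k V} (hα : α ≠ 0) : ∃ v, α v ≠ 0 := by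
  by_contra h
  push_neg at h
  exact hα (LinearMap.ext fun v => h v)

lemma dualMap_sub_smul (s : V →ₗ[k] V) {α : Module.Dual k V} (hα : α ≠ 0)
    (hker : LinearMap.ker α = LinearMap.ker (s - LinearMap.id)) (φ : Module.Dual k V) :
    ∃ c : k, s.dualMap φ - φ = c • α := by
  obtain ⟨v₀, hv₀⟩ := exists_ne_zero_of_dual hα
  set ψ := s.dualMap φ - φ with hψ
  have hvan : ∀ v, α v = 0 → ψ v = 0 := by
    intro v hv
    have : v ∈ LinearMap.ker (s - LinearMap.id) := hker ▸ LinearMap.mem_ker.mpr hv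
    have hsv : s v = v := by
      have := LinearMap.mem_ker.mp this
      rw [LinearMap.sub_apply, LinearMap.id_apply, sub_eq_zero] at this
      exact this
    simp [hψ, LinearMap.dualMap_apply, hsv]
  refine ⟨ψ v₀ / α v₀, LinearMap.ext fun w => ?_⟩
  have hw : α (w - (α w / α v₀) • v₀) = 0 := by
    simp [map_sub, map_smul, div_mul_cancel₀ _ hv₀, smul_eq_mul]
  have := hvan _ hw
  rw [map_sub, map_smul, sub_eq_zero, smul_eq_mul] at this
  rw [this, LinearMap.smul_apply, smul_eq_mul]
  field_simp

lemma dualMap_alpha {s : V →ₗ[k] V} (hs : s ∘ₗ s = LinearMap.id) {α : Module.Dual k V}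
    (hker : LinearMap.ker α = LinearMap.ker (s - LinearMap.id)) :
    s.dualMap α = -α := by
  ext v
  have hmem : s v + v ∈ LinearMap.ker (s - LinearMap.id) := by
    rw [LinearMap.mem_ker, LinearMap.sub_apply, LinearMap.id_apply, sub_eq_zero,
      map_add]
    have : s (s v) = v := DFunLike.congr_fun hs v
    rw [this]
    exact add_comm v (s v)
  have : α (s v + v) = 0 := by
    rw [← LinearMap.mem_ker, hker]; exact hmem
  rw [map_add] at this
  simp only [LinearMap.dualMap_apply, LinearMap.neg_apply]
  linear_combination this


lemma polyAut_t {s : V →ₗ[k] V} (hs : s ∘ₗ s = LinearMap.id) {α : Module.Dual k V}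
    (hker : LinearMap.ker α = LinearMap.ker (s - LinearMap.id)) :
    polyAut b s (dtp b α) = -(dtp b α) := by
  rw [polyAut_dtp, dualMap_alpha hs hker, map_neg]

lemma polyAut_sub_mem (s : V →ₗ[k] V) {α : Module.Dual k V} (hα : α ≠ 0)
    (hker : LinearMap.ker α = LinearMap.ker (s - LinearMap.id)) (f : MvPolynomial ι k) :
    polyAut b s f - f ∈ Ideal.span {dtp b α} := by
  induction f using MvPolynomial.induction_on with
  | C a =>
      rw [show polyAut b s (MvPolynomial.C a) = MvPolynomial.C a from
        (polyAut b s).commutes a, sub_self]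
      exact Ideal.zero_mem _
  | add p q hp hq =>
      rw [map_add]
      have : polyAut b s p + polyAut b s q - (p + q)
          = (polyAut b s p - p) + (polyAut b s q - q) := by ring
      rw [this]
      exact Ideal.add_mem _ hp hq
  | mul_X p i hp =>
      have hX : polyAut b s (MvPolynomial.X i) - MvPolynomial.X i ∈ Ideal.span {dtp b α} := by
        obtain ⟨c, hc⟩ := dualMap_sub_smul s hα hker (b i)
        have : polyAut b s (MvPolynomial.X i) - MvPolynomial.X i = MvPolynomial.C c * dtp b α := by
          rw [← dtp_basis b i, polyAut_dtp, ← map_sub, hc, map_smul,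
            MvPolynomial.smul_eq_C_mul]
        rw [this]
        exact Ideal.mul_mem_left _ _ (Ideal.subset_span rfl)
      have : polyAut b s (p * MvPolynomial.X i) - p * MvPolynomial.X i
          = polyAut b s p * (polyAut b s (MvPolynomial.X i) - MvPolynomial.X i)
            + (polyAut b s p - p) * MvPolynomial.X i := by
        rw [map_mul]; ring
      rw [this]
      exact Ideal.add_mem _ (Ideal.mul_mem_left _ _ hX) (Ideal.mul_mem_right _ _ hp)

lemma half_half (hchar : (2 : k) ≠ 0) :
    (MvPolynomial.C (2⁻¹ : k) + MvPolynomial.C (2⁻¹ : k) : MvPolynomial ι k) = 1 := by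
  rw [← map_add, ← map_one MvPolynomial.C]
  congr 1
  field_simp
  ring

lemma anti_div (hchar : (2 : k) ≠ 0) {s : V →ₗ[k] V} (hs : s ∘ₗ s = LinearMap.id)
    {α : Module.Dual k V} (hα : α ≠ 0)
    (hker : LinearMap.ker α = LinearMap.ker (s - LinearMap.id)) {f : MvPolynomial ι k}
    (hf : polyAut b s f = -f) :
    ∃ g, f = dtp b α * g ∧ polyAut b s g = g := by
  have htne : dtp b α ≠ 0 := fun h => hα (dtp_injective b (by rw [h, map_zero]))
  have h2 : f + f ∈ Ideal.span {dtp b α} := by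
    have := polyAut_sub_mem b s hα hker f
    rw [hf] at this
    have h' := neg_mem this
    rw [neg_sub, sub_neg_eq_add] at h'
    exact h'
  obtain ⟨h, hh⟩ := Ideal.mem_span_singleton'.mp h2
  refine ⟨MvPolynomial.C (2⁻¹ : k) * h, ?_, ?_⟩
  · have : f = MvPolynomial.C (2⁻¹ : k) * (f + f) := by
      rw [mul_add, ← add_mul, half_half hchar, one_mul]
    rw [this, ← hh]; ring
  · have key : dtp b α * polyAut b s (MvPolynomial.C (2⁻¹ : k) * h)
        = dtp b α * (MvPolynomial.C (2⁻¹ : k) * h) := by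
      have hfeq : f = dtp b α * (MvPolynomial.C (2⁻¹ : k) * h) := by
        have : f = MvPolynomial.C (2⁻¹ : k) * (f + f) := by
          rw [mul_add, ← add_mul, half_half hchar, one_mul]
        rw [this, ← hh]; ring
      have h1 := congrArg (polyAut b s) hfeq
      rw [hf, map_mul, polyAut_t b hs hker] at h1
      rw [← hfeq]
      linear_combination h1
    exact mul_left_cancel₀ htne key

lemma decomp (hchar : (2 : k) ≠ 0) {s : V →ₗ[k] V} (hs : s ∘ₗ s = LinearMap.id)
    {α : Module.Dual k V} (hα : α ≠ 0)
    (hker : LinearMap.ker α = LinearMap.ker (s - LinearMap.id)) (a : MvPolynomial ι k) :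
    ∃ p g : MvPolynomial ι k, polyAut b s p = p ∧ polyAut b s g = g ∧
      a = p + dtp b α * g := by
  set p := MvPolynomial.C (2⁻¹ : k) * (a + polyAut b s a) with hp
  set f := MvPolynomial.C (2⁻¹ : k) * (a - polyAut b s a) with hfdef
  have hCp : polyAut b s (MvPolynomial.C (2⁻¹:k)) = MvPolynomial.C (2⁻¹:k) :=
    (polyAut b s).commutes _
  have hpp : polyAut b s p = p := by
    rw [hp, map_mul, hCp, map_add, polyAut_sq b hs]; ring_nf
  have hff : polyAut b s f = -f := by
    rw [hfdef, map_mul, hCp, map_sub, polyAut_sq b hs]; ring_nf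
  obtain ⟨g, hg, hinv⟩ := anti_div b hchar hs hα hker hff
  refine ⟨p, g, hpp, hinv, ?_⟩
  rw [← hg, hp, hfdef]
  have : MvPolynomial.C (2⁻¹:k) * (a + polyAut b s a) + MvPolynomial.C (2⁻¹:k) * (a - polyAut b s a)
      = (MvPolynomial.C (2⁻¹:k) + MvPolynomial.C (2⁻¹:k)) * a := by ring
  rw [this, half_half hchar, one_mul]

end Aux

/-- The sequence of left `A`-modules `0 → A → A ⊗_{A^s} A → A → 0` is exact, where the
first map is `η_s : a ↦ a·α_s ⊗ 1 + a ⊗ α_s` and the second map sends `x ⊗ y` to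
`x·s(y)`. In particular `η_s` is injective, `x ⊗ y ↦ x·s(y)` is surjective, and its
kernel equals the image of `η_s`. -/
theorem exact_sequence_eta
    {k : Type*} [Field k] (hchar : (2 : k) ≠ 0)
    {V : Type*} [AddCommGroup V] [Module k V] [FiniteDimensional k V]
    (s : V →ₗ[k] V) (hs : s ∘ₗ s = LinearMap.id)
    (hhyp : Module.finrank k (LinearMap.ker (s - LinearMap.id)) + 1 = Module.finrank k V)
    (α : Module.Dual k V) (hα : α ≠ 0)
    (hker : LinearMap.ker α = LinearMap.ker (s - LinearMap.id))
    {ι : Type*} (b : Module.Basis ι k (Module.Dual k V))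
    (η : MvPolynomial ι k →ₗ[MvPolynomial ι k]
          MvPolynomial ι k ⊗[invariantSub b s] MvPolynomial ι k)
    (hη : ∀ a : MvPolynomial ι k,
      η a = (a * dualToPoly b α) ⊗ₜ[invariantSub b s] (1 : MvPolynomial ι k)
          + a ⊗ₜ[invariantSub b s] dualToPoly b α)
    (m : MvPolynomial ι k ⊗[invariantSub b s] MvPolynomial ι k →ₗ[MvPolynomial ι k]
          MvPolynomial ι k)
    (hm : ∀ x y : MvPolynomial ι k, m (x ⊗ₜ[invariantSub b s] y) = x * polyAut b s y) :
    Function.Injective η ∧ Function.Surjective m ∧ LinearMap.range η = LinearMap.ker m := by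
  have htt : dtp b α = dualToPoly b α := dtp_eq b α
  have hσt : polyAut b s (dualToPoly b α) = -(dualToPoly b α) := by
    rw [← htt]; exact polyAut_t b hs hker
  have ht0 : dualToPoly b α ≠ 0 := by
    rw [← htt]
    exact fun h => hα (dtp_injective b (by rw [h, map_zero]))
  have hmem : ∀ p : MvPolynomial ι k, polyAut b s p = p → p ∈ invariantSub b s := by
    intro p h
    exact (AlgHom.mem_equalizer _ _ p).mpr (by rw [h, AlgHom.id_apply])
  have hsmul : ∀ (r : invariantSub b s) (x : MvPolynomial ι k), r • x = (r : MvPolynomial ι k) * x :=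
    fun r x => rfl
  -- spanning
  have hspan : ∀ z : MvPolynomial ι k ⊗[invariantSub b s] MvPolynomial ι k,
      ∃ x y : MvPolynomial ι k,
        z = x ⊗ₜ[invariantSub b s] 1 + y ⊗ₜ[invariantSub b s] (dualToPoly b α) := by
    intro z
    induction z using TensorProduct.induction_on with
    | zero => exact ⟨0, 0, by simp⟩
    | tmul x a =>
        obtain ⟨p, g, hpinv, hginv, hdecomp⟩ := decomp b hchar hs hα hker a
        rw [htt] at hdecomp
        refine ⟨p * x, g * x, ?_⟩
        have h1 : x ⊗ₜ[invariantSub b s] p = (p * x) ⊗ₜ[invariantSub b s] (1 : MvPolynomial ι k) :=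
          calc x ⊗ₜ[invariantSub b s] p
              = x ⊗ₜ[invariantSub b s] ((⟨p, hmem p hpinv⟩ : invariantSub b s) • (1 : MvPolynomial ι k)) := by
                rw [hsmul, mul_one]
            _ = ((⟨p, hmem p hpinv⟩ : invariantSub b s) • x) ⊗ₜ[invariantSub b s] (1 : MvPolynomial ι k) :=
                (TensorProduct.smul_tmul _ _ _).symm
            _ = (p * x) ⊗ₜ[invariantSub b s] (1 : MvPolynomial ι k) := by rw [hsmul]
        have h2 : x ⊗ₜ[invariantSub b s] (dualToPoly b α * g)
            = (g * x) ⊗ₜ[invariantSub b s] (dualToPoly b α) :=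
          calc x ⊗ₜ[invariantSub b s] (dualToPoly b α * g)
              = x ⊗ₜ[invariantSub b s] ((⟨g, hmem g hginv⟩ : invariantSub b s) • (dualToPoly b α)) := by
                rw [hsmul]; ring_nf
            _ = ((⟨g, hmem g hginv⟩ : invariantSub b s) • x) ⊗ₜ[invariantSub b s] (dualToPoly b α) :=
                (TensorProduct.smul_tmul _ _ _).symm
            _ = (g * x) ⊗ₜ[invariantSub b s] (dualToPoly b α) := by rw [hsmul]
        rw [hdecomp, TensorProduct.tmul_add, h1, h2]
    | add u v hu hv =>
        obtain ⟨x1, y1, h1⟩ := hu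
        obtain ⟨x2, y2, h2⟩ := hv
        refine ⟨x1 + x2, y1 + y2, ?_⟩
        rw [h1, h2, TensorProduct.add_tmul, TensorProduct.add_tmul]
        abel
  -- injectivity
  have hker0 : ∀ a : MvPolynomial ι k, η a = 0 → a = 0 := by
    intro a ha
    have hmu := congrArg (LinearMap.mul' (invariantSub b s) (MvPolynomial ι k)) ha
    rw [hη, map_add, map_zero, LinearMap.mul'_apply, LinearMap.mul'_apply, mul_one] at hmu
    have h2 : (2 : k) • (a * dualToPoly b α) = 0 := by
      rw [two_smul]; exact hmu
    have hat : a * dualToPoly b α = 0 := by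
      rcases smul_eq_zero.mp h2 with h | h
      · exact absurd h hchar
      · exact h
    rcases mul_eq_zero.mp hat with h | h
    · exact h
    · exact absurd h ht0
  have hinj : Function.Injective η := by
    intro a1 a2 h
    have := hker0 (a1 - a2) (by rw [map_sub, h, sub_self])
    exact sub_eq_zero.mp this
  refine ⟨hinj, ?_, ?_⟩
  · intro p
    exact ⟨p ⊗ₜ[invariantSub b s] 1, by rw [hm, map_one, mul_one]⟩
  · apply le_antisymm
    · rintro z ⟨a, rfl⟩
      rw [LinearMap.mem_ker, hη, map_add, hm, hm, map_one, mul_one, hσt]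
      ring
    · intro z hz
      obtain ⟨x, y, rfl⟩ := hspan z
      rw [LinearMap.mem_ker, map_add, hm, hm, map_one, mul_one, hσt] at hz
      have hx : x = y * dualToPoly b α := by linear_combination hz
      exact ⟨y, by rw [hη y, ← hx]⟩
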